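/- arXiv:1202.5291 — 6 statements merged into one kernel-verified Lean document; each statement's English description precedes it below -/
import Mathlib

section
/- On the board of size 2 × 2 × ⋯ × 2 × m (with k-1 coordinates equal to 2 and last coordinate m ≥ 2, k ≥ 3), the square (1,1,...,1) is not reachable by any sequence of knight moves from the square (2,2,...,2); in particular the knight graph on this board is disconnected and has no Hamiltonian cycle. -/
/-!
Every side of the board except the last has length 2, so a knight move can change such a
coordinate by at most 1. The `±2` step of every move therefore happens in the last coordinate,
whose parity is thus invariant along walks; `(2,…,2)` and `(1,…,1)` differ in that parity.
A closed tour would visit both squares and so make the graph connected.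
-/

/-- A knight move in `k` dimensions: coordinates differ in exactly two places,
one by `±1` and one by `±2`. -/
def knightMove {k : ℕ} (a b : Fin k → ℤ) : Prop :=
  ∃ i j : Fin k, i ≠ j ∧ |a i - b i| = 1 ∧ |a j - b j| = 2 ∧
    ∀ l, l ≠ i → l ≠ j → a l = b l

/-- Membership in the board `∏ [1, n i]`. -/
def onBoard {k : ℕ} (n : Fin k → ℕ) (a : Fin k → ℤ) : Prop :=
  ∀ i, 1 ≤ a i ∧ a i ≤ (n i : ℤ)

/-- The knight graph on the board `∏ [1, n i]`. -/
def knightGraph {k : ℕ} (n : Fin k → ℕ) :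
    SimpleGraph {a : Fin k → ℤ // onBoard n a} where
  Adj x y := knightMove x.1 y.1
  symm := by
    constructor
    rintro x y ⟨i, j, hij, h1, h2, h3⟩
    exact ⟨i, j, hij, by rwa [abs_sub_comm], by rwa [abs_sub_comm],
      fun l hli hlj => (h3 l hli hlj).symm⟩
  loopless := by
    constructor
    rintro x ⟨i, j, hij, h1, h2, h3⟩
    simp at h1

/-- Existence of a closed knight's tour (Hamiltonian cycle of the knight graph). -/
def HasClosedTour {k : ℕ} (n : Fin k → ℕ) : Prop :=
  ∃ (x : {a : Fin k → ℤ // onBoard n a}) (w : (knightGraph n).Walk x x),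
    w.IsHamiltonianCycle

namespace SimpleGraph

variable {V : Type*} {G : SimpleGraph V}

lemma Reachable.eq_of_adj_imp_eq {β : Type*} {f : V → β} (hf : ∀ x y, G.Adj x y → f x = f y)
    {x y : V} (h : G.Reachable x y) : f x = f y := by
  rw [reachable_eq_reflTransGen] at h
  induction h with
  | refl => rfl
  | tail _ hbc ih => exact ih.trans (hf _ _ hbc)

lemma Walk.IsHamiltonianCycle.connected [DecidableEq V] {x : V} {p : G.Walk x x}
    (hp : p.IsHamiltonianCycle) : G.Connected := by
  have := hp.finite
  have := Fintype.ofFinite V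
  exact IsHamiltonian.connected fun _ => ⟨x, p, hp⟩

end SimpleGraph

section KnightGraph

variable {k : ℕ} {n : Fin k → ℕ} {a b : Fin k → ℤ}

lemma abs_sub_le_of_onBoard (ha : onBoard n a) (hb : onBoard n b) (i : Fin k) :
    |a i - b i| ≤ (n i : ℤ) - 1 := by
  have := ha i
  have := hb i
  rw [abs_le]
  constructor <;> linarith

lemma knightMove.modEq_of_onBoard {j : Fin k} (hn : ∀ i ≠ j, n i ≤ 2)
    (ha : onBoard n a) (hb : onBoard n b) (h : knightMove a b) : a j ≡ b j [ZMOD 2] := by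
  obtain ⟨-, j', -, -, hj', -⟩ := h
  obtain rfl : j' = j := by
    by_contra hne
    have := abs_sub_le_of_onBoard ha hb j'
    have : (n j' : ℤ) ≤ 2 := by exact_mod_cast hn j' hne
    omega
  exact (Int.modEq_of_dvd ((dvd_abs _ _).1 (by rw [hj']))).symm

lemma knightGraph_reachable_modEq {j : Fin k} (hn : ∀ i ≠ j, n i ≤ 2)
    {x y : {a : Fin k → ℤ // onBoard n a}} (h : (knightGraph n).Reachable x y) :
    x.1 j ≡ y.1 j [ZMOD 2] :=
  h.eq_of_adj_imp_eq (f := fun z : {a // onBoard n a} => z.1 j % 2) fun x y hxy =>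
    knightMove.modEq_of_onBoard hn x.2 y.2 hxy

end KnightGraph

theorem two_dot_dot_two_m_disconnected {k : ℕ} (hk : 3 ≤ k) (n : Fin k → ℕ)
    (hn : ∀ i : Fin k, (i : ℕ) < k - 1 → n i = 2)
    (h2 : onBoard n (fun _ => 2)) (h1 : onBoard n (fun _ => 1)) :
    ¬ (knightGraph n).Reachable ⟨fun _ => 2, h2⟩ ⟨fun _ => 1, h1⟩ ∧
      ¬ (knightGraph n).Connected ∧ ¬ HasClosedTour n := by
  have hn_ne_last : ∀ i ≠ (⟨k - 1, by omega⟩ : Fin k), n i ≤ 2 := fun i hi =>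
    (hn i (by have : (i : ℕ) ≠ k - 1 := fun h => hi (Fin.ext h); omega)).le
  have hnr : ¬ (knightGraph n).Reachable ⟨fun _ => 2, h2⟩ ⟨fun _ => 1, h1⟩ := fun h =>
    absurd (knightGraph_reachable_modEq hn_ne_last h) (by norm_num [Int.ModEq])
  exact ⟨hnr, fun hc => hnr (hc.preconnected _ _),
    fun ⟨_, _, hw⟩ => hnr (hw.connected.preconnected _ _)⟩
end

section
/- If all dimensions satisfy 2 ≤ n_i ≤ 3 for a k-dimensional board with k ≥ 3, then the square (2,2,...,2) has no neighbor in the knight graph; hence the knight graph has an isolated vertex and no Hamiltonian cycle. -/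
lemma SimpleGraph.Walk.IsHamiltonianCycle.exists_adj {V : Type*} [DecidableEq V]
    {G : SimpleGraph V} {a : V} {p : G.Walk a a} (hp : p.IsHamiltonianCycle) (v : V) :
    ∃ w, G.Adj v w :=
  ⟨_, Walk.adj_snd (hp.rotate (hp.mem_support v)).isCycle.not_nil⟩

lemma not_knightMove_of_abs_sub_le_one {k : ℕ} {a b : Fin k → ℤ}
    (h : ∀ i, |a i - b i| ≤ 1) : ¬ knightMove a b := by
  rintro ⟨-, j, -, -, hj, -⟩
  linarith [h j]

lemma abs_two_sub_le_one_of_onBoard {k : ℕ} {n : Fin k → ℕ} (hn : ∀ i, n i ≤ 3)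
    {b : Fin k → ℤ} (hb : onBoard n b) (i : Fin k) : |2 - b i| ≤ 1 := by
  have := hb i
  have : (n i : ℤ) ≤ 3 := by exact_mod_cast hn i
  rw [abs_le]
  omega

theorem isolated_vertex_of_dims_le_three_general {k : ℕ} (n : Fin k → ℕ)
    (hn : ∀ i, 2 ≤ n i ∧ n i ≤ 3) (h2 : onBoard n (fun _ => 2)) :
    (∀ y, ¬ (knightGraph n).Adj ⟨fun _ => 2, h2⟩ y) ∧ ¬ HasClosedTour n := by
  have isolated : ∀ y, ¬ (knightGraph n).Adj ⟨fun _ => 2, h2⟩ y := fun y =>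
    not_knightMove_of_abs_sub_le_one
      (abs_two_sub_le_one_of_onBoard (fun i => (hn i).2) y.2)
  refine ⟨isolated, ?_⟩
  rintro ⟨_, _, hp⟩
  obtain ⟨y, hy⟩ := hp.exists_adj ⟨fun _ => 2, h2⟩
  exact isolated y hy

/-- If all dimensions satisfy `2 ≤ n i ≤ 3` (with `k ≥ 3`), the square `(2,…,2)`
has no neighbour in the knight graph; hence there is an isolated vertex and no
Hamiltonian cycle. -/
theorem isolated_vertex_of_dims_le_three {k : ℕ} (hk : 3 ≤ k) (n : Fin k → ℕ)
    (hn : ∀ i, 2 ≤ n i ∧ n i ≤ 3) (h2 : onBoard n (fun _ => 2)) :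
    (∀ y, ¬ (knightGraph n).Adj ⟨fun _ => 2, h2⟩ y) ∧ ¬ HasClosedTour n :=
  isolated_vertex_of_dims_le_three_general n hn h2
end

section
/- If a generalised (α,β)-knight tour exists on a k-dimensional board (k ≥ 2) containing at least two squares, then gcd(α,β) = 1. -/
/-- A generalised `(α,β)`-knight move in `k` dimensions. -/
def genKnightMove (α β : ℕ) {k : ℕ} (a b : Fin k → ℤ) : Prop :=
  ∃ i j : Fin k, i ≠ j ∧ |a i - b i| = (α : ℤ) ∧ |a j - b j| = (β : ℤ) ∧
    ∀ l, l ≠ i → l ≠ j → a l = b l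

/-- The `(α,β)`-knight graph on the board `∏ [1, n i]`. -/
def genKnightGraph (α β : ℕ) {k : ℕ} (n : Fin k → ℕ) :
    SimpleGraph {a : Fin k → ℤ // onBoard n a} where
  Adj x y := x ≠ y ∧ genKnightMove α β x.1 y.1
  symm := by
    constructor
    rintro x y ⟨hne, i, j, hij, h1, h2, h3⟩
    exact ⟨hne.symm, i, j, hij, by rwa [abs_sub_comm], by rwa [abs_sub_comm],
      fun l hli hlj => (h3 l hli hlj).symm⟩
  loopless := by
    constructor
    rintro x ⟨hne, _⟩
    exact hne rfl

/-!
Every knight move changes each coordinate by `0`, `±α` or `±β`, so along any walk in the knight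
graph all coordinates stay congruent modulo `gcd α β`. A Hamiltonian cycle makes the graph
connected, and a board with two squares contains two squares differing by `1` in one coordinate;
hence `gcd α β ∣ 1`.
-/

theorem SimpleGraph.Walk.IsHamiltonianCycle.preconnected {V : Type*} [DecidableEq V]
    {G : SimpleGraph V} {a : V} {p : G.Walk a a} (hp : p.IsHamiltonianCycle) :
    G.Preconnected := fun u v =>
  ((p.takeUntil u (hp.mem_support u)).reverse.append (p.takeUntil v (hp.mem_support v))).reachable

section KnightGraph

variable {α β k : ℕ}

theorem natCast_gcd_dvd_sub_of_genKnightMove {a b : Fin k → ℤ} (h : genKnightMove α β a b)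
    (l : Fin k) : (Nat.gcd α β : ℤ) ∣ a l - b l := by
  obtain ⟨i, j, -, hi, hj, hrest⟩ := h
  by_cases hli : l = i
  · subst hli
    exact (dvd_abs _ _).mp (hi ▸ Int.natCast_dvd_natCast.mpr (Nat.gcd_dvd_left α β))
  by_cases hlj : l = j
  · subst hlj
    exact (dvd_abs _ _).mp (hj ▸ Int.natCast_dvd_natCast.mpr (Nat.gcd_dvd_right α β))
  simp [hrest l hli hlj]

theorem natCast_gcd_dvd_sub_of_reachable {n : Fin k → ℕ} {u v : {a : Fin k → ℤ // onBoard n a}}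
    (h : (genKnightGraph α β n).Reachable u v) (l : Fin k) :
    (Nat.gcd α β : ℤ) ∣ u.1 l - v.1 l := by
  obtain ⟨p⟩ := h
  induction p with
  | nil => simp
  | cons hadj _ ih =>
    rw [← sub_add_sub_cancel]
    exact dvd_add (natCast_gcd_dvd_sub_of_genKnightMove hadj.2 l) ih

end KnightGraph

section Board

variable {k : ℕ} {n : Fin k → ℕ}

theorem onBoard_update_add_one_of_lt {a b : Fin k → ℤ} {i : Fin k} (ha : onBoard n a)
    (hb : onBoard n b) (hlt : a i < b i) : onBoard n (Function.update a i (a i + 1)) := by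
  intro j
  rcases eq_or_ne j i with rfl | hj
  · rw [Function.update_self]
    constructor <;> linarith [(ha j).1, (hb j).2]
  · rw [Function.update_of_ne hj]
    exact ha j

theorem exists_onBoard_update_add_one {a b : Fin k → ℤ} (ha : onBoard n a) (hb : onBoard n b)
    (hab : a ≠ b) : ∃ c i, onBoard n c ∧ onBoard n (Function.update c i (c i + 1)) := by
  obtain ⟨i, hi⟩ := Function.ne_iff.mp hab
  rcases hi.lt_or_gt with hlt | hlt
  · exact ⟨a, i, ha, onBoard_update_add_one_of_lt ha hb hlt⟩
  · exact ⟨b, i, hb, onBoard_update_add_one_of_lt hb ha hlt⟩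

end Board

theorem gcd_eq_one_of_gen_tour_general (α β : ℕ)
    {k : ℕ} (n : Fin k → ℕ)
    (htwo : ∃ a b : Fin k → ℤ, onBoard n a ∧ onBoard n b ∧ a ≠ b)
    (htour : ∃ (x : {a : Fin k → ℤ // onBoard n a})
      (w : (genKnightGraph α β n).Walk x x), w.IsHamiltonianCycle) :
    Nat.gcd α β = 1 := by
  obtain ⟨a, b, ha, hb, hab⟩ := htwo
  obtain ⟨_, _, hw⟩ := htour
  obtain ⟨c, i, hc, hc'⟩ := exists_onBoard_update_add_one ha hb hab
  have hdvd := natCast_gcd_dvd_sub_of_reachable (hw.preconnected ⟨c, hc⟩ ⟨_, hc'⟩) i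
  dsimp only at hdvd
  rw [Function.update_self, sub_add_cancel_left, Int.dvd_neg] at hdvd
  exact Nat.dvd_one.mp (Int.natCast_dvd_natCast.mp hdvd)

/-- If an `(α,β)`-tour exists on a board with at least two squares, then
`α` and `β` are coprime. -/
theorem gcd_eq_one_of_gen_tour (α β : ℕ) (hα : 0 < α) (hβ : 0 < β)
    {k : ℕ} (hk : 2 ≤ k) (n : Fin k → ℕ)
    (htwo : ∃ a b : Fin k → ℤ, onBoard n a ∧ onBoard n b ∧ a ≠ b)
    (htour : ∃ (x : {a : Fin k → ℤ // onBoard n a})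
      (w : (genKnightGraph α β n).Walk x x), w.IsHamiltonianCycle) :
    Nat.gcd α β = 1 :=
  gcd_eq_one_of_gen_tour_general α β n htwo htour
end

section
/- There is no closed knight's tour on the 4 × n chessboard for any n ≥ 1. -/
/-!
Colour the squares of the `4 × n` board in two ways: by the parity of the coordinate sum, and
by whether they lie in an outer row (1 or 4) or an inner one (2 or 3). Every knight move changes
the parity. No knight move joins two outer squares, and pairing rows 1 ↔ 2, 3 ↔ 4 shows that
outer and inner squares are equally many; so a Hamiltonian cycle has to alternate between outer
and inner squares. Hence both colourings change at every step of a closed tour and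
"outer ↔ even" is the same on all squares, but `(1, c)` and `(4, c)` are both outer squares of
different parity.
-/

namespace SimpleGraph.Walk

variable {V : Type*} {G : SimpleGraph V}

theorem apply_eq_of_forall_mem_darts {β : Type*} (c : V → β) {u v : V} (p : G.Walk u v)
    (hp : ∀ d ∈ p.darts, c d.fst = c d.snd) : ∀ x ∈ p.support, c x = c u := by
  induction p with
  | nil => simp
  | cons h p ih =>
    rw [darts_cons, List.forall_mem_cons] at hp
    rintro x (_ | ⟨_, hx⟩)
    · rfl
    · exact (ih hp.2 x hx).trans hp.1.symm

theorem support_tail_perm_dropLast {u : V} (p : G.Walk u u) :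
    p.support.tail.Perm p.support.dropLast := by
  rw [← List.perm_cons u, cons_tail_support]
  conv_lhs => rw [← p.dropLast_support_concat]
  exact List.perm_append_singleton _ _

variable [DecidableEq V] {u : V} {p : G.Walk u u}

theorem IsHamiltonianCycle.sum_map_darts {M : Type*} [AddCommMonoid M] [Fintype V]
    (hp : p.IsHamiltonianCycle) (f : V → M) :
    (p.darts.map fun d => f d.fst + f d.snd).sum = 2 • ∑ v, f v := by
  have hH := hp.isHamiltonian_tail
  have htail : (p.support.tail.map f).sum = ∑ v, f v := by
    rw [← support_tail_of_not_nil p hp.not_nil, ← List.sum_toFinset f hH.isPath.support_nodup,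
      hH.toFinset_support]
  calc (p.darts.map fun d => f d.fst + f d.snd).sum
      = ((p.darts.map (·.fst)).map f).sum + ((p.darts.map (·.snd)).map f).sum := by
        simp only [List.sum_map_add, List.map_map]; rfl
    _ = 2 • ∑ v, f v := by
        rw [map_fst_darts, map_snd_darts, ← (p.support_tail_perm_dropLast.map f).sum_eq, htail,
          two_nsmul]

theorem IsHamiltonianCycle.fst_mem_iff_snd_notMem (hp : p.IsHamiltonianCycle) {S : Set V}
    (hS : G.IsIndepSet S) (hcard : Nat.card ↥Sᶜ ≤ Nat.card ↥S) {d : G.Dart} (hd : d ∈ p.darts) :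
    d.fst ∈ S ↔ d.snd ∉ S := by
  classical
  have := hp.finite
  cases nonempty_fintype V
  -- Every dart has nonnegative weight, while the total weight is `2 (#Sᶜ - #S) ≤ 0`.
  let g : V → ℤ := fun v => if v ∈ S then -1 else 1
  have hsum : ∑ v, g v ≤ 0 := by
    simp only [g, Finset.sum_ite, Finset.sum_const, smul_neg, nsmul_eq_mul, mul_one]
    simp only [Nat.card_eq_fintype_card, Fintype.card_subtype, Set.mem_compl_iff] at hcard
    omega
  have hnonneg : ∀ d ∈ p.darts, 0 ≤ g d.fst + g d.snd := by
    intro d _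
    have hnot_both := fun hfst hsnd => hS hfst hsnd d.adj.ne d.adj
    simp only [g]
    split_ifs <;> simp_all
  have hle := List.single_le_sum (l := p.darts.map fun d => g d.fst + g d.snd)
    (by simpa using hnonneg) _ (List.mem_map_of_mem hd)
  rw [hp.sum_map_darts, two_nsmul] at hle
  have hzero : g d.fst + g d.snd = 0 := le_antisymm (by linarith) (hnonneg d hd)
  simp only [g] at hzero
  split_ifs at hzero <;> simp_all

end SimpleGraph.Walk

instance finite_onBoard {k : ℕ} (n : Fin k → ℕ) : Finite {a : Fin k → ℤ // onBoard n a} :=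
  Set.Finite.to_subtype <| (Set.finite_Icc 1 fun i => (n i : ℤ)).subset
    fun _ ha => ⟨fun i => (ha i).1, fun i => (ha i).2⟩

namespace knightMove

theorem odd_sum_sub {k : ℕ} {a b : Fin k → ℤ} (h : knightMove a b) : Odd (∑ l, (a l - b l)) := by
  obtain ⟨i, j, hij, hi, hj, hrest⟩ := h
  rw [Finset.sum_eq_add i j hij (fun l _ hl => sub_eq_zero.mpr (hrest l hl.1 hl.2))
    (by simp) (by simp)]
  rw [abs_eq (by norm_num)] at hi hj
  rcases hi with hi | hi <;> rcases hj with hj | hj <;> rw [hi, hj] <;> decide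

theorem even_sum_iff {k : ℕ} {a b : Fin k → ℤ} (h : knightMove a b) :
    Even (∑ l, a l) ↔ ¬ Even (∑ l, b l) := by
  have := h.odd_sum_sub
  rw [Finset.sum_sub_distrib, ← Int.not_even_iff_odd, Int.even_sub] at this
  tauto

theorem abs_sub_fin_two {a b : Fin 2 → ℤ} (h : knightMove a b) (l : Fin 2) :
    |a l - b l| = 1 ∨ |a l - b l| = 2 := by
  obtain ⟨i, j, hij, hi, hj, -⟩ := h
  fin_cases i <;> fin_cases j <;> fin_cases l <;> simp_all

end knightMove

def IsOuterRow (a : Fin 2 → ℤ) : Prop := a 0 = 1 ∨ a 0 = 4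

theorem not_isOuterRow_and_of_knightMove {a b : Fin 2 → ℤ} (h : knightMove a b) :
    ¬ (IsOuterRow a ∧ IsOuterRow b) := by
  rintro ⟨ha, hb⟩
  unfold IsOuterRow at ha hb
  rcases h.abs_sub_fin_two 0 with h | h <;> rw [abs_eq (by norm_num)] at h <;> omega

def pairRow (r : ℤ) : ℤ := if r % 2 = 1 then r + 1 else r - 1

theorem pairRow_involutive : Function.Involutive pairRow := by
  intro r; unfold pairRow; split_ifs <;> omega

def swapRows (a : Fin 2 → ℤ) : Fin 2 → ℤ := ![pairRow (a 0), a 1]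

theorem swapRows_involutive : Function.Involutive swapRows := by
  intro a; ext l; fin_cases l <;> simp [swapRows, pairRow_involutive (a 0)]

section FourRows

variable {n : ℕ}

theorem onBoard_four_iff {a : Fin 2 → ℤ} :
    onBoard ![4, n] a ↔ (1 ≤ a 0 ∧ a 0 ≤ 4) ∧ (1 ≤ a 1 ∧ a 1 ≤ n) := by
  simp [onBoard, Fin.forall_fin_two]

theorem onBoard_swapRows {a : Fin 2 → ℤ} (h : onBoard ![4, n] a) :
    onBoard ![4, n] (swapRows a) := by
  rw [onBoard_four_iff] at *
  simp only [swapRows, pairRow, Matrix.cons_val_zero, Matrix.cons_val_one]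
  split_ifs <;> omega

theorem isOuterRow_swapRows_iff {a : Fin 2 → ℤ} (h : onBoard ![4, n] a) :
    IsOuterRow (swapRows a) ↔ ¬ IsOuterRow a := by
  rw [onBoard_four_iff] at h
  simp only [IsOuterRow, swapRows, pairRow, Matrix.cons_val_zero]
  split_ifs <;> omega

theorem isIndepSet_isOuterRow :
    (knightGraph ![4, n]).IsIndepSet {v | IsOuterRow v.1} :=
  fun _ hu _ hv _ h => not_isOuterRow_and_of_knightMove h ⟨hu, hv⟩

theorem card_compl_isOuterRow_le :
    Nat.card ↥{v : {a // onBoard ![4, n] a} | IsOuterRow v.1}ᶜ ≤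
      Nat.card ↥{v : {a // onBoard ![4, n] a} | IsOuterRow v.1} :=
  Nat.card_le_card_of_injective
    (fun v => ⟨⟨swapRows v.1.1, onBoard_swapRows v.1.2⟩, (isOuterRow_swapRows_iff v.1.2).mpr v.2⟩)
    fun _ _ h => Subtype.ext (Subtype.ext (swapRows_involutive.injective (congrArg (·.1.1) h)))

end FourRows

theorem no_tour_four_by_n_general (n : ℕ) : ¬ HasClosedTour ![4, n] := by
  rintro ⟨x, w, hw⟩
  have hconst := w.apply_eq_of_forall_mem_darts (fun v => IsOuterRow v.1 ↔ Even (∑ l, v.1 l))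
    fun d hd => propext <| by
      have halt : IsOuterRow d.fst.1 ↔ ¬ IsOuterRow d.snd.1 :=
        hw.fst_mem_iff_snd_notMem isIndepSet_isOuterRow card_compl_isOuterRow_le hd
      rw [d.adj.even_sum_iff, halt, not_iff_not]
  have hcol := (onBoard_four_iff.mp x.2).2
  have h1 := hconst ⟨![1, x.1 1], onBoard_four_iff.mpr ⟨by norm_num, hcol⟩⟩ (hw.mem_support _)
  have h4 := hconst ⟨![4, x.1 1], onBoard_four_iff.mpr ⟨by norm_num, hcol⟩⟩ (hw.mem_support _)
  have hsame := h1.trans h4.symm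
  simp [IsOuterRow, Int.even_iff] at hsame
  omega

/-- There is no closed knight's tour on the `4 × n` chessboard. -/
theorem no_tour_four_by_n (n : ℕ) (hn : 1 ≤ n) : ¬ HasClosedTour ![4, n] :=
  no_tour_four_by_n_general n
end

section
/- Suppose a graph G has a Hamiltonian cycle (a^i)_{i∈I} containing a well-oriented site (a^n, a^{n+1}, a^m, a^{m+1}), i.e. indices n, m with a^{n+1}−a^m = ±(a^{m+1}−a^n) ∈ {±2e_i} for some coordinate direction i. Then the knight graph on the board B × [1,2] (one extra dimension of size 2) has a Hamiltonian cycle. -/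
/-- A closed knight's tour of the board `∏ [1, n i]`, presented as a cyclic
sequence `a : ZMod N → (Fin k → ℤ)` visiting every board square exactly once,
with consecutive squares joined by knight moves. -/
def IsClosedTour {k : ℕ} (n : Fin k → ℕ) (N : ℕ) (a : ZMod N → Fin k → ℤ) : Prop :=
  0 < N ∧ (∀ i, onBoard n (a i)) ∧ Function.Injective a ∧
    (∀ x, onBoard n x → ∃ i, a i = x) ∧ ∀ i, knightMove (a i) (a (i + 1))

theorem ZMod.val_add_one_eq_or {n : ℕ} [NeZero n] (t : ZMod n) :
    (t + 1).val = t.val + 1 ∨ (t + 1).val = 0 ∧ t.val + 1 = n := by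
  have ht := t.val_lt
  rw [← ZMod.natCast_zmod_val t, ← Nat.cast_succ, ZMod.val_natCast, ZMod.val_natCast,
    Nat.mod_eq_of_lt ht]
  rcases (Nat.succ_le_of_lt ht).lt_or_eq with h | h
  · exact .inl (Nat.mod_eq_of_lt h)
  · exact .inr ⟨by rw [h, Nat.mod_self], h⟩

section CycleAppend

variable {β : Type*} {N : ℕ}

def cycleAppend (u v : ZMod N → β) (t : ZMod (2 * N)) : β :=
  if t.val < N then u t.cast else v t.cast

variable [NeZero N] (u v : ZMod N → β)

theorem cycleAppend_natCast_val (s : ZMod N) :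
    cycleAppend u v (s.val : ZMod (2 * N)) = u s := by
  have hs : (s.val : ZMod (2 * N)).val = s.val := ZMod.val_cast_of_lt (by have := s.val_lt; omega)
  rw [cycleAppend, hs, if_pos s.val_lt, ZMod.cast_eq_val, hs, ZMod.natCast_zmod_val]

theorem cycleAppend_natCast_add_val (s : ZMod N) :
    cycleAppend u v ((N + s.val : ℕ) : ZMod (2 * N)) = v s := by
  have hs : ((N + s.val : ℕ) : ZMod (2 * N)).val = N + s.val :=
    ZMod.val_cast_of_lt (by have := s.val_lt; omega)
  rw [cycleAppend, hs, if_neg (by omega), ZMod.cast_eq_val, hs, Nat.cast_add,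
    ZMod.natCast_self, zero_add, ZMod.natCast_zmod_val]

theorem ZMod.eq_of_cast_eq_of_val_lt_iff {t t' : ZMod (2 * N)} (hlt : t.val < N ↔ t'.val < N)
    (h : (t.cast : ZMod N) = t'.cast) : t = t' := by
  rw [ZMod.cast_eq_val, ZMod.cast_eq_val, ZMod.natCast_eq_natCast_iff'] at h
  have := t.val_lt
  have := t'.val_lt
  apply ZMod.val_injective
  by_cases ht : t.val < N
  · rwa [Nat.mod_eq_of_lt ht, Nat.mod_eq_of_lt (hlt.1 ht)] at h
  · rw [Nat.mod_eq_sub_mod (not_lt.1 ht), Nat.mod_eq_sub_mod (not_lt.1 (mt hlt.2 ht)),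
      Nat.mod_eq_of_lt (by omega), Nat.mod_eq_of_lt (by omega)] at h
    omega

theorem cycleAppend_injective (hu : Function.Injective u) (hv : Function.Injective v)
    (huv : ∀ s s', u s ≠ v s') : Function.Injective (cycleAppend u v) := by
  intro t t' h
  unfold cycleAppend at h
  by_cases ht : t.val < N <;> by_cases ht' : t'.val < N <;>
    simp only [ht, ht', if_true, if_false] at h
  · exact ZMod.eq_of_cast_eq_of_val_lt_iff (iff_of_true ht ht') (hu h)
  · exact absurd h (huv _ _)
  · exact absurd h.symm (huv _ _)
  · exact ZMod.eq_of_cast_eq_of_val_lt_iff (iff_of_false ht ht') (hv h)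

theorem ZMod.cast_add_one_eq_zero_of_val_lt_iff {t : ZMod (2 * N)}
    (h : ¬(t.val < N ↔ (t + 1).val < N)) : ((t + 1).cast : ZMod N) = 0 := by
  rw [ZMod.cast_eq_val]
  have : (t + 1).val = 0 ∨ (t + 1).val = N := by
    rcases ZMod.val_add_one_eq_or t with h' | h' <;> omega
  rcases this with h' | h' <;> simp [h']

theorem cycleAppend_add_one {R : β → β → Prop} (hu : ∀ s, R (u s) (u (s + 1)))
    (hv : ∀ s, R (v s) (v (s + 1))) (huv : R (u (-1)) (v 0)) (hvu : R (v (-1)) (u 0))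
    (t : ZMod (2 * N)) : R (cycleAppend u v t) (cycleAppend u v (t + 1)) := by
  have hcast : ((t + 1).cast : ZMod N) = t.cast + 1 := by
    rw [ZMod.cast_add (dvd_mul_left N 2), ZMod.cast_one (dvd_mul_left N 2)]
  have hwrap : ¬(t.val < N ↔ (t + 1).val < N) → (t.cast : ZMod N) = -1 := fun h =>
    eq_neg_of_add_eq_zero_left (hcast ▸ ZMod.cast_add_one_eq_zero_of_val_lt_iff h)
  unfold cycleAppend
  rw [hcast]
  split_ifs with h h'
  · exact hu _
  · rw [hwrap (by tauto), neg_add_cancel]; exact huv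
  · rw [hwrap (by tauto), neg_add_cancel]; exact hvu
  · exact hv _

end CycleAppend

section Snoc

variable {k : ℕ}

theorem knightMove_snoc {x y : Fin k → ℤ} (h : knightMove x y) (c : ℤ) :
    knightMove (Fin.snoc x c : Fin (k + 1) → ℤ) (Fin.snoc y c) := by
  obtain ⟨i, j, hij, hi, hj, hrest⟩ := h
  refine ⟨i.castSucc, j.castSucc, by simpa using hij, by simpa using hi, by simpa using hj, ?_⟩
  intro l hli hlj
  induction l using Fin.lastCases with
  | last => simp
  | cast l =>
    simpa using hrest l (fun h => hli (h ▸ rfl)) (fun h => hlj (h ▸ rfl))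

theorem knightMove_snoc_of_sub_eq {x y : Fin k → ℤ} {i : Fin k} {ε c d : ℤ}
    (h : ∀ l, y l - x l = if l = i then ε else 0) (hε : |ε| = 2) (hcd : |c - d| = 1) :
    knightMove (Fin.snoc x c : Fin (k + 1) → ℤ) (Fin.snoc y d) := by
  refine ⟨Fin.last k, i.castSucc, (Fin.castSucc_lt_last i).ne', by simpa using hcd, ?_, ?_⟩
  · have hi := h i
    rw [if_pos rfl] at hi
    rw [Fin.snoc_castSucc, Fin.snoc_castSucc, abs_sub_comm, hi, hε]
  · intro l hl hli
    induction l using Fin.lastCases with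
    | last => exact absurd rfl hl
    | cast l =>
      have hl := h l
      rw [if_neg (fun hle : l = i => hli (hle ▸ rfl))] at hl
      simp only [Fin.snoc_castSucc]
      linarith

theorem onBoard_snoc {n : Fin k → ℕ} {x : Fin k → ℤ} (hx : onBoard n x) {c : ℤ}
    (hc₁ : 1 ≤ c) (hc₂ : c ≤ 2) : onBoard (Fin.snoc n 2) (Fin.snoc x c) := by
  intro l
  induction l using Fin.lastCases with
  | last => simp [hc₁, hc₂]
  | cast l => simpa using hx l

theorem onBoard_init {n : Fin k → ℕ} {x : Fin (k + 1) → ℤ} (hx : onBoard (Fin.snoc n 2) x) :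
    onBoard n (Fin.init x) := fun l => by simpa [Fin.init] using hx l.castSucc

theorem last_eq_one_or_two_of_onBoard {n : Fin k → ℕ} {x : Fin (k + 1) → ℤ}
    (hx : onBoard (Fin.snoc n 2) x) : x (Fin.last k) = 1 ∨ x (Fin.last k) = 2 := by
  have := hx (Fin.last k)
  simp only [Fin.snoc_last, Nat.cast_ofNat] at this
  omega

end Snoc

/-- If a closed knight's tour of a `k`-dimensional board contains a
well-oriented site `(aᵖ, aᵖ⁺¹, a^q, a^{q+1})` (so `aᵖ⁺¹ − a^q = ±(a^{q+1} − aᵖ)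
∈ {±2eᵢ}`), then the board with one extra dimension of size `2` has a closed
knight's tour. -/
theorem tour_extend_by_two {k : ℕ} (n : Fin k → ℕ) (N : ℕ)
    (a : ZMod N → Fin k → ℤ) (ha : IsClosedTour n N a)
    (p q : ZMod N) (i : Fin k) (ε δ : ℤ)
    (hε : ε = 2 ∨ ε = -2) (hδ : δ = 2 ∨ δ = -2)
    (h1 : ∀ l, a (p + 1) l - a q l = if l = i then ε else 0)
    (h2 : ∀ l, a (q + 1) l - a p l = if l = i then δ else 0) :
    ∃ (M : ℕ) (b : ZMod M → Fin (k + 1) → ℤ),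
      IsClosedTour (Fin.snoc n 2) M b := by
  obtain ⟨hN, hboard, hinj, hsurj, hadj⟩ := ha
  have : NeZero N := ⟨hN.ne'⟩
  set u : ZMod N → Fin (k + 1) → ℤ := fun s => Fin.snoc (a (p + 1 + s)) 1
  set v : ZMod N → Fin (k + 1) → ℤ := fun s => Fin.snoc (a (q + 1 + s)) 2
  have hu_inj : Function.Injective u := fun s s' h =>
    add_left_cancel (hinj (Fin.snoc_injective2 h).1)
  have hv_inj : Function.Injective v := fun s s' h =>
    add_left_cancel (hinj (Fin.snoc_injective2 h).1)
  refine ⟨2 * N, cycleAppend u v, by positivity, fun t => ?_,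
    cycleAppend_injective u v hu_inj hv_inj fun s s' h => ?_, fun x hx => ?_, ?_⟩
  · unfold cycleAppend
    split_ifs
    exacts [onBoard_snoc (hboard _) le_rfl one_le_two, onBoard_snoc (hboard _) one_le_two le_rfl]
  · simpa [u, v] using (Fin.snoc_injective2 h).2
  · obtain ⟨j, hj⟩ := hsurj _ (onBoard_init hx)
    rw [← Fin.snoc_init_self x, ← hj]
    rcases last_eq_one_or_two_of_onBoard hx with h | h <;> rw [h]
    · exact ⟨_, (cycleAppend_natCast_val u v (j - (p + 1))).trans (by simp [u])⟩
    · exact ⟨_, (cycleAppend_natCast_add_val u v (j - (q + 1))).trans (by simp [v])⟩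
  · have habs : ∀ {η : ℤ}, (η = 2 ∨ η = -2) → |η| = 2 := by
      rintro _ (rfl | rfl) <;> norm_num
    apply cycleAppend_add_one
    · exact fun s => by simpa [u, add_assoc] using knightMove_snoc (hadj (p + 1 + s)) 1
    · exact fun s => by simpa [v, add_assoc] using knightMove_snoc (hadj (q + 1 + s)) 2
    · simpa [u, v] using
        knightMove_snoc_of_sub_eq h2 (habs hδ) (by norm_num : |(1 : ℤ) - 2| = 1)
    · simpa [u, v] using
        knightMove_snoc_of_sub_eq h1 (habs hε) (by norm_num : |(2 : ℤ) - 1| = 1)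
end

section
/- If the knight graph on a k-dimensional board B has a Hamiltonian cycle containing two vertex-disjoint sites (each a pair of edges whose endpoints pairwise differ by ±2e_i in some coordinate, in the well-oriented or non-well-oriented configuration), then for every m ≥ 2 the knight graph on B × [1,m] has a Hamiltonian cycle, which again contains two vertex-disjoint sites. -/
/-- A site of a cyclic tour `a`: a pair of edges `(a p, a (p+1))` and
`(a q, a (q+1))` whose endpoints pairwise differ by `±2eᵢ` in some coordinate,
either in the well-oriented or non-well-oriented configuration. -/
def IsSite {N k : ℕ} (a : ZMod N → Fin k → ℤ) (p q : ZMod N) : Prop :=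
  ∃ (i : Fin k) (ε δ : ℤ), (ε = 2 ∨ ε = -2) ∧ (δ = 2 ∨ δ = -2) ∧
    (((∀ l, a (p + 1) l - a q l = if l = i then ε else 0) ∧
      (∀ l, a (q + 1) l - a p l = if l = i then δ else 0)) ∨
     ((∀ l, a (p + 1) l - a (q + 1) l = if l = i then ε else 0) ∧
      (∀ l, a q l - a p l = if l = i then δ else 0)))

/-- Two sites are disjoint when their eight endpoint squares are pairwise
distinct. -/
def DisjointSites {N k : ℕ} (a : ZMod N → Fin k → ℤ)
    (p₁ q₁ p₂ q₂ : ZMod N) : Prop :=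
  ([a p₁, a (p₁ + 1), a q₁, a (q₁ + 1),
    a p₂, a (p₂ + 1), a q₂, a (q₂ + 1)] : List (Fin k → ℤ)).Pairwise (· ≠ ·)

/-!
Stack `m` copies of the tour, one in each layer of `B × [1, m]`. If `(x, x')` is an edge of the
cycle in layer `t` and `(y, y')` an edge of the tour placed in layer `t + 1` with `y' - x` and
`y - x'` in `{±2eᵢ}`, then `x → y'` and `y → x'` are knight moves, and trading the two edges for
them merges the two cycles into one. A site `(p, q)` supplies such a pair of edges: the edge `q`
of the same tour fits over the edge `p` when the site is well-oriented, the edge `q` of the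
reversed tour when it is not. Each new layer thus receives the tour or its reversal, joined to the
layer below through one of its sites and to the layer above through the other. The second site of
the bottom layer and the first site of the top layer are never cut, and they are disjoint because
they lie in different layers.
-/

section CycleSplice

variable {α : Type*} {M N : ℕ}

def HasEdge (b : ZMod M → α) (x y : α) : Prop :=
  ∃ j, b j = x ∧ b (j + 1) = y

/-- Cut the cycle `f` open between `u` and `u + 1` and the cycle `g` between `v` and `v + 1`,
and join them into the single cycle `f (u + 1), …, f u, g (v + 1), …, g v`. -/
def cycleSplice (f : ZMod M → α) (u : ZMod M) (g : ZMod N → α) (v : ZMod N) :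
    ZMod (M + N) → α :=
  fun j => if j.val < M then f (u + 1 + j.val) else g (v + 1 + (j.val - M : ℕ))

lemma ZMod.val_add_one_lt_of_ne_neg_one [NeZero M] {z : ZMod M} (hz : z ≠ -1) :
    z.val + 1 < M := by
  refine lt_of_le_of_ne (ZMod.val_lt z) fun h => hz ?_
  rw [← ZMod.natCast_zmod_val z, eq_neg_iff_add_eq_zero, ← Nat.cast_add_one, h,
    ZMod.natCast_self]

lemma ZMod.natCast_eq_neg_one_of_add_one_eq {s : ℕ} (h : s + 1 = M) : (s : ZMod M) = -1 := by
  rw [eq_neg_iff_add_eq_zero, ← Nat.cast_add_one, h, ZMod.natCast_self]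

variable {f : ZMod M → α} {u : ZMod M} {g : ZMod N → α} {v : ZMod N}

lemma cycleSplice_natCast_of_lt {s : ℕ} (hs : s < M) :
    cycleSplice f u g v s = f (u + 1 + s) := by
  have : ((s : ZMod (M + N))).val = s := ZMod.val_natCast_of_lt (by omega)
  simp [cycleSplice, this, hs]

lemma cycleSplice_natCast_add {s : ℕ} (hs : s < N) :
    cycleSplice f u g v (M + s : ℕ) = g (v + 1 + s) := by
  have : (((M + s : ℕ) : ZMod (M + N))).val = M + s := ZMod.val_natCast_of_lt (by omega)
  simp only [cycleSplice, this, Nat.add_sub_cancel_left,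
    if_neg (Nat.not_lt.2 (Nat.le_add_right M s))]

lemma ZMod.eq_natCast_or_eq_natCast_add [NeZero N] (j : ZMod (M + N)) :
    (∃ s < M, j = s) ∨ ∃ s < N, j = (M + s : ℕ) := by
  have hj := ZMod.val_lt j
  rcases lt_or_ge j.val M with h | h
  · exact Or.inl ⟨j.val, h, (ZMod.natCast_zmod_val j).symm⟩
  · refine Or.inr ⟨j.val - M, by omega, ?_⟩
    rw [Nat.add_sub_cancel' h, ZMod.natCast_zmod_val]

lemma range_cycleSplice [NeZero M] [NeZero N] :
    Set.range (cycleSplice f u g v) = Set.range f ∪ Set.range g := by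
  apply subset_antisymm
  · rintro _ ⟨j, rfl⟩
    unfold cycleSplice
    split_ifs
    exacts [Or.inl ⟨_, rfl⟩, Or.inr ⟨_, rfl⟩]
  · rintro _ (⟨x, rfl⟩ | ⟨y, rfl⟩)
    · refine ⟨(x - u - 1).val, ?_⟩
      rw [cycleSplice_natCast_of_lt (ZMod.val_lt _), ZMod.natCast_zmod_val]
      ring_nf
    · refine ⟨(M + (y - v - 1).val : ℕ), ?_⟩
      rw [cycleSplice_natCast_add (ZMod.val_lt _), ZMod.natCast_zmod_val]
      ring_nf

lemma cycleSplice_injective [NeZero N] (hf : Function.Injective f) (hg : Function.Injective g)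
    (hfg : ∀ x y, f x ≠ g y) : Function.Injective (cycleSplice f u g v) := by
  intro j₁ j₂ h
  rcases ZMod.eq_natCast_or_eq_natCast_add j₁ with ⟨s₁, hs₁, rfl⟩ | ⟨s₁, hs₁, rfl⟩ <;>
    rcases ZMod.eq_natCast_or_eq_natCast_add j₂ with ⟨s₂, hs₂, rfl⟩ | ⟨s₂, hs₂, rfl⟩
  · rw [cycleSplice_natCast_of_lt hs₁, cycleSplice_natCast_of_lt hs₂] at h
    rw [((ZMod.natCast_eq_natCast_iff _ _ _).1 (add_left_cancel (hf h))).eq_of_lt_of_lt hs₁ hs₂]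
  · rw [cycleSplice_natCast_of_lt hs₁, cycleSplice_natCast_add hs₂] at h
    exact absurd h (hfg _ _)
  · rw [cycleSplice_natCast_add hs₁, cycleSplice_natCast_of_lt hs₂] at h
    exact absurd h.symm (hfg _ _)
  · rw [cycleSplice_natCast_add hs₁, cycleSplice_natCast_add hs₂] at h
    rw [((ZMod.natCast_eq_natCast_iff _ _ _).1 (add_left_cancel (hg h))).eq_of_lt_of_lt hs₁ hs₂]

lemma cycleSplice_rel [NeZero M] [NeZero N] {R : α → α → Prop}
    (hf : ∀ x, R (f x) (f (x + 1))) (hg : ∀ y, R (g y) (g (y + 1))) (hfg : R (f u) (g (v + 1))) (hgf : R (g v) (f (u + 1)))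
    (j : ZMod (M + N)) : R (cycleSplice f u g v j) (cycleSplice f u g v (j + 1)) := by
  rcases ZMod.eq_natCast_or_eq_natCast_add j with ⟨s, hs, rfl⟩ | ⟨s, hs, rfl⟩
  · rw [cycleSplice_natCast_of_lt hs]
    rcases (show s + 1 ≤ _ from hs).lt_or_eq with hs1 | hs1
    · rw [← Nat.cast_add_one, cycleSplice_natCast_of_lt hs1, Nat.cast_add_one, ← add_assoc]
      exact hf _
    · have hj : ((s + 1 : ℕ) : ZMod (M + N)) = (M + 0 : ℕ) := by rw [hs1, add_zero]
      rw [← Nat.cast_add_one, hj, cycleSplice_natCast_add (NeZero.pos N),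
        ZMod.natCast_eq_neg_one_of_add_one_eq hs1]
      simpa using hfg
  · rw [cycleSplice_natCast_add hs]
    rcases (show s + 1 ≤ _ from hs).lt_or_eq with hs1 | hs1
    · rw [← Nat.cast_add_one, Nat.add_assoc, cycleSplice_natCast_add hs1, Nat.cast_add_one,
        ← add_assoc]
      exact hg _
    · have hj : ((M + (s + 1) : ℕ) : ZMod (M + N)) = (0 : ℕ) := by
        rw [hs1, ZMod.natCast_self, Nat.cast_zero]
      rw [← Nat.cast_add_one, Nat.add_assoc, hj, cycleSplice_natCast_of_lt (NeZero.pos M),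
        ZMod.natCast_eq_neg_one_of_add_one_eq hs1]
      simpa using hgf

lemma hasEdge_cycleSplice_left [NeZero M] {x : ZMod M} (hx : x ≠ u) :
    HasEdge (cycleSplice f u g v) (f x) (f (x + 1)) := by
  have hlt := ZMod.val_add_one_lt_of_ne_neg_one (z := x - u - 1) fun h => hx (by
    linear_combination h)
  refine ⟨(x - u - 1).val, ?_, ?_⟩
  · rw [cycleSplice_natCast_of_lt (by omega), ZMod.natCast_zmod_val]
    ring_nf
  · rw [← Nat.cast_add_one, cycleSplice_natCast_of_lt hlt, Nat.cast_add_one,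
      ZMod.natCast_zmod_val]
    ring_nf

lemma hasEdge_cycleSplice_right [NeZero N] {y : ZMod N} (hy : y ≠ v) :
    HasEdge (cycleSplice f u g v) (g y) (g (y + 1)) := by
  have hlt := ZMod.val_add_one_lt_of_ne_neg_one (z := y - v - 1) fun h => hy (by
    linear_combination h)
  refine ⟨(M + (y - v - 1).val : ℕ), ?_, ?_⟩
  · rw [cycleSplice_natCast_add (by omega), ZMod.natCast_zmod_val]
    ring_nf
  · rw [← Nat.cast_add_one, Nat.add_assoc, cycleSplice_natCast_add hlt, Nat.cast_add_one,
      ZMod.natCast_zmod_val]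
    ring_nf

end CycleSplice

section Knight

variable {k : ℕ}

def TwoApart (i : Fin k) (x y : Fin k → ℤ) : Prop :=
  ∃ ε : ℤ, (ε = 2 ∨ ε = -2) ∧ ∀ l, x l - y l = if l = i then ε else 0

lemma isSite_iff {N : ℕ} {a : ZMod N → Fin k → ℤ} {p q : ZMod N} :
    IsSite a p q ↔ ∃ i, (TwoApart i (a (p + 1)) (a q) ∧ TwoApart i (a (q + 1)) (a p)) ∨
      (TwoApart i (a (p + 1)) (a (q + 1)) ∧ TwoApart i (a q) (a p)) := by
  constructor
  · rintro ⟨i, ε, δ, hε, hδ, ⟨h₁, h₂⟩ | ⟨h₁, h₂⟩⟩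
    exacts [⟨i, .inl ⟨⟨ε, hε, h₁⟩, δ, hδ, h₂⟩⟩, ⟨i, .inr ⟨⟨ε, hε, h₁⟩, δ, hδ, h₂⟩⟩]
  · rintro ⟨i, ⟨⟨ε, hε, h₁⟩, δ, hδ, h₂⟩ | ⟨⟨ε, hε, h₁⟩, δ, hδ, h₂⟩⟩
    exacts [⟨i, ε, δ, hε, hδ, .inl ⟨h₁, h₂⟩⟩, ⟨i, ε, δ, hε, hδ, .inr ⟨h₁, h₂⟩⟩]

namespace TwoApart

variable {i : Fin k} {x y : Fin k → ℤ}

lemma symm (h : TwoApart i x y) : TwoApart i y x := by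
  obtain ⟨ε, hε, h⟩ := h
  refine ⟨-ε, by omega, fun l => ?_⟩
  have := h l
  split_ifs at this ⊢ <;> linarith

lemma ne (h : TwoApart i x y) : x ≠ y := by
  rintro rfl
  obtain ⟨ε, hε, h⟩ := h
  have := h i
  simp only [sub_self, ↓reduceIte] at this
  omega

lemma not_knightMove (h : TwoApart i x y) : ¬ knightMove x y := by
  rintro ⟨i', -, -, h₁, -, -⟩
  obtain ⟨ε, hε, h⟩ := h
  rw [h i'] at h₁
  split_ifs at h₁ <;> rcases hε with rfl | rfl <;> norm_num at h₁

lemma snoc (h : TwoApart i x y) (τ : ℤ) :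
    TwoApart i.castSucc (Fin.snoc x τ) (Fin.snoc y τ) := by
  obtain ⟨ε, hε, h⟩ := h
  refine ⟨ε, hε, fun l => ?_⟩
  induction l using Fin.lastCases with
  | last => simp [(Fin.castSucc_lt_last i).ne']
  | cast l => simpa using h l

end TwoApart

lemma knightMove.symm {x y : Fin k → ℤ} (h : knightMove x y) : knightMove y x := by
  obtain ⟨i, j, hij, h₁, h₂, h₃⟩ := h
  exact ⟨i, j, hij, by rwa [abs_sub_comm], by rwa [abs_sub_comm],
    fun l hi hj => (h₃ l hi hj).symm⟩

lemma knightMove.ne {x y : Fin k → ℤ} (h : knightMove x y) : x ≠ y := by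
  rintro rfl
  obtain ⟨i, -, -, h₁, -⟩ := h
  simp at h₁

lemma knightMove.snoc {x y : Fin k → ℤ} (h : knightMove x y) (τ : ℤ) :
    knightMove (Fin.snoc x τ) (Fin.snoc y τ) := by
  obtain ⟨i, j, hij, h₁, h₂, h₃⟩ := h
  refine ⟨i.castSucc, j.castSucc, by simpa using hij, by simpa using h₁, by simpa using h₂,
    fun l => ?_⟩
  induction l using Fin.lastCases with
  | last => simp
  | cast l => simpa using h₃ l

lemma knightMove_snoc_of_twoApart {i : Fin k} {x y : Fin k → ℤ} {τ τ' : ℤ}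
    (h : TwoApart i y x) (hτ : |τ - τ'| = 1) :
    knightMove (Fin.snoc x τ) (Fin.snoc y τ') := by
  obtain ⟨ε, hε, h⟩ := h
  refine ⟨Fin.last k, i.castSucc, (Fin.castSucc_lt_last i).ne', by simpa using hτ, ?_,
    fun l hl hli => ?_⟩
  · have := h i
    simp only [↓reduceIte] at this
    rw [Fin.snoc_castSucc, Fin.snoc_castSucc, abs_sub_comm, this]
    rcases hε with rfl | rfl <;> norm_num
  · induction l using Fin.lastCases with
    | last => exact absurd rfl hl
    | cast l =>
      have := h l
      rw [if_neg fun e : l = i => hli (e ▸ rfl)] at this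
      simp only [Fin.snoc_castSucc]
      omega

lemma IsSite.pairwise_ne {N : ℕ} {a : ZMod N → Fin k → ℤ} {p q : ZMod N}
    (hmov : ∀ r, knightMove (a r) (a (r + 1))) (hs : IsSite a p q) :
    [a p, a (p + 1), a q, a (q + 1)].Pairwise (· ≠ ·) := by
  have hp := hmov p
  have hq := hmov q
  simp only [List.pairwise_cons, List.mem_cons, List.not_mem_nil, or_false, forall_eq_or_imp,
    forall_eq, List.Pairwise.nil, and_true, IsEmpty.forall_iff, implies_true]
  obtain ⟨i, ⟨h₁, h₂⟩ | ⟨h₁, h₂⟩⟩ := isSite_iff.1 hs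
  · refine ⟨⟨hp.ne, fun e => h₁.not_knightMove ?_, h₂.ne.symm⟩,
      ⟨h₁.ne, fun e => h₂.not_knightMove ?_⟩, hq.ne⟩
    · rw [← e]; exact hp.symm
    · rw [← e]; exact hp.symm
  · refine ⟨⟨hp.ne, h₂.ne.symm, fun e => h₂.not_knightMove ?_⟩,
      ⟨fun e => h₁.not_knightMove ?_, h₁.ne⟩, hq.ne⟩
    · rw [e]; exact hq
    · rw [e]; exact hq

end Knight

section Tour

variable {k : ℕ} {n : Fin k → ℕ}

lemma neg_neg_sub_one_add_one {R : Type*} [Ring R] (x : R) : -(-x - 1 + 1) = x := by abel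

lemma neg_neg_sub_one {R : Type*} [Ring R] (x : R) : -(-x - 1) = x + 1 := by abel

lemma onBoard_snoc_iff {t : ℕ} {x : Fin (k + 1) → ℤ} :
    onBoard (Fin.snoc n t) x ↔
      onBoard n (Fin.init x) ∧ 1 ≤ x (Fin.last k) ∧ x (Fin.last k) ≤ t := by
  simp only [onBoard, Fin.forall_fin_succ', Fin.snoc_castSucc, Fin.snoc_last, Fin.init]

lemma onBoard_snoc_snoc_iff {t : ℕ} {y : Fin k → ℤ} {τ : ℤ} :
    onBoard (Fin.snoc n t) (Fin.snoc y τ) ↔ onBoard n y ∧ 1 ≤ τ ∧ τ ≤ t := by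
  rw [onBoard_snoc_iff, Fin.init_snoc, Fin.snoc_last]

lemma onBoard_snoc_mono {t t' : ℕ} {x : Fin (k + 1) → ℤ} (hx : onBoard (Fin.snoc n t) x)
    (h : t ≤ t') : onBoard (Fin.snoc n t') x := by
  rw [onBoard_snoc_iff] at hx ⊢
  exact ⟨hx.1, hx.2.1, hx.2.2.trans (by exact_mod_cast h)⟩

lemma IsClosedTour.snoc_one {N : ℕ} {a : ZMod N → Fin k → ℤ} (ha : IsClosedTour n N a) :
    IsClosedTour (Fin.snoc n 1) N (fun j => Fin.snoc (a j) 1) := by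
  obtain ⟨hN, hon, hinj, hsurj, hmov⟩ := ha
  refine ⟨hN, fun j => onBoard_snoc_snoc_iff.2 ⟨hon j, le_rfl, by simp⟩,
    fun j₁ j₂ h => hinj (Fin.snoc_injective2 h).1, fun x hx => ?_, fun j => (hmov j).snoc 1⟩
  obtain ⟨hx, hx₁, hx₂⟩ := onBoard_snoc_iff.1 hx
  obtain ⟨j, hj⟩ := hsurj _ hx
  refine ⟨j, ?_⟩
  beta_reduce
  rw [hj, show (1 : ℤ) = x (Fin.last k) by push_cast at hx₂; omega, Fin.snoc_init_self]

lemma IsClosedTour.reverse {N : ℕ} {c : ZMod N → Fin k → ℤ} (hc : IsClosedTour n N c) :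
    IsClosedTour n N (fun j => c (-j)) := by
  obtain ⟨hN, hon, hinj, hsurj, hmov⟩ := hc
  refine ⟨hN, fun j => hon _, fun j₁ j₂ h => neg_injective (hinj h), fun x hx => ?_,
    fun j => ?_⟩
  · obtain ⟨j, rfl⟩ := hsurj x hx
    exact ⟨-j, by simp only [neg_neg]⟩
  · simpa [neg_add_eq_sub] using (hmov (-j - 1)).symm

lemma IsSite.reverse {N : ℕ} {c : ZMod N → Fin k → ℤ} {p q : ZMod N} (hs : IsSite c p q) :
    IsSite (fun j => c (-j)) (-p - 1) (-q - 1) := by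
  rw [isSite_iff] at hs ⊢
  simp only [neg_neg_sub_one_add_one, neg_neg_sub_one]
  obtain ⟨i, ⟨h₁, h₂⟩ | ⟨h₁, h₂⟩⟩ := hs
  exacts [⟨i, .inl ⟨h₂.symm, h₁.symm⟩⟩, ⟨i, .inr ⟨h₂.symm, h₁.symm⟩⟩]

end Tour

section Disjoint

variable {k N : ℕ} {c : ZMod N → Fin k → ℤ} {p₁ q₁ p₂ q₂ : ZMod N}

lemma disjointSites_iff_nodup :
    DisjointSites c p₁ q₁ p₂ q₂ ↔
      ([c p₁, c (p₁ + 1), c q₁, c (q₁ + 1)] ++ [c p₂, c (p₂ + 1), c q₂, c (q₂ + 1)]).Nodup :=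
  Iff.rfl

lemma DisjointSites.symm (h : DisjointSites c p₁ q₁ p₂ q₂) : DisjointSites c p₂ q₂ p₁ q₁ :=
  disjointSites_iff_nodup.2 (List.nodup_append_comm.1 (disjointSites_iff_nodup.1 h))

lemma DisjointSites.reverse (h : DisjointSites c p₁ q₁ p₂ q₂) :
    DisjointSites (fun j => c (-j)) (-p₂ - 1) (-q₂ - 1) (-p₁ - 1) (-q₁ - 1) := by
  have hswap (w x y z : Fin k → ℤ) : [w, x, y, z].Perm [x, w, z, y] :=
    (List.Perm.swap x w _).trans (.cons x (.cons w (.swap z y [])))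
  rw [disjointSites_iff_nodup] at h ⊢
  simp only [neg_neg_sub_one_add_one, neg_neg_sub_one]
  exact ((hswap _ _ _ _).append (hswap _ _ _ _)).nodup_iff.1 (List.nodup_append_comm.1 h)

lemma DisjointSites.ne (h : DisjointSites c p₁ q₁ p₂ q₂) :
    c p₁ ≠ c p₂ ∧ c p₁ ≠ c q₂ ∧ c q₁ ≠ c q₂ := by
  simp only [DisjointSites, List.pairwise_cons, List.mem_cons, List.not_mem_nil, or_false,
    forall_eq_or_imp, forall_eq] at h
  exact ⟨h.1.2.2.2.1, h.1.2.2.2.2.2.1, h.2.2.1.2.2.2.1⟩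

end Disjoint

section Stack

variable {k : ℕ} {n : Fin k → ℕ}

lemma IsClosedTour.splice {t M N : ℕ} {b : ZMod M → Fin (k + 1) → ℤ}
    {c : ZMod N → Fin k → ℤ} {u : ZMod M} {v : ZMod N} {i : Fin k} {w w' : Fin k → ℤ}
    (hb : IsClosedTour (Fin.snoc n t) M b) (hc : IsClosedTour n N c)
    (hu : b u = Fin.snoc w t) (hu₁ : b (u + 1) = Fin.snoc w' t)
    (hv : TwoApart i (c (v + 1)) w) (hv₁ : TwoApart i (c v) w') :
    IsClosedTour (Fin.snoc n (t + 1)) (M + N)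
      (cycleSplice b u (fun s => Fin.snoc (c s) ((t + 1 : ℕ) : ℤ)) v) := by
  obtain ⟨hM, hbon, hbinj, hbsurj, hbmov⟩ := hb
  obtain ⟨hN, hcon, hcinj, hcsurj, hcmov⟩ := hc
  have := NeZero.of_pos hM
  have := NeZero.of_pos hN
  have hrange := range_cycleSplice (f := b) (u := u) (v := v)
    (g := fun s => Fin.snoc (c s) ((t + 1 : ℕ) : ℤ))
  refine ⟨by omega, fun j => ?_, cycleSplice_injective hbinj
      (fun _ _ h => hcinj (Fin.snoc_injective2 h).1) fun r s h => ?_, fun x hx => ?_,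
    cycleSplice_rel hbmov (fun s => (hcmov s).snoc _) ?_ ?_⟩
  · obtain ⟨r, hr⟩ | ⟨s, hs⟩ := hrange.subset ⟨j, rfl⟩
    · exact hr ▸ onBoard_snoc_mono (hbon r) (Nat.le_succ t)
    · exact hs ▸ onBoard_snoc_snoc_iff.2 ⟨hcon s, by omega, le_rfl⟩
  · have := (onBoard_snoc_iff.1 (hbon r)).2.2
    rw [h, Fin.snoc_last] at this
    omega
  · obtain ⟨hx, hx₁, hx₂⟩ := onBoard_snoc_iff.1 hx
    change x ∈ Set.range _
    rw [hrange]
    by_cases hlow : x (Fin.last k) ≤ t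
    · exact .inl (hbsurj x (onBoard_snoc_iff.2 ⟨hx, hx₁, hlow⟩))
    · obtain ⟨r, hr⟩ := hcsurj _ hx
      refine .inr ⟨r, ?_⟩
      beta_reduce
      rw [hr, show ((t + 1 : ℕ) : ℤ) = x (Fin.last k) by push_cast at hx₂ ⊢; omega,
        Fin.snoc_init_self]
  · rw [hu]
    exact knightMove_snoc_of_twoApart hv (by push_cast; norm_num)
  · rw [hu₁]
    exact knightMove_snoc_of_twoApart hv₁.symm (by push_cast; norm_num)

def IsBisitedTour (n : Fin k → ℕ) (N : ℕ) (c : ZMod N → Fin k → ℤ)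
    (p₁ q₁ p₂ q₂ : ZMod N) : Prop :=
  IsClosedTour n N c ∧ IsSite c p₁ q₁ ∧ IsSite c p₂ q₂ ∧ DisjointSites c p₁ q₁ p₂ q₂

variable {N : ℕ}

lemma IsBisitedTour.exists_matching {c : ZMod N → Fin k → ℤ} {p₁ q₁ p₂ q₂ : ZMod N}
    (hc : IsBisitedTour n N c p₁ q₁ p₂ q₂) :
    ∃ (c' : ZMod N → Fin k → ℤ) (p₁' q₁' p₂' q₂' : ZMod N) (i : Fin k),
      IsBisitedTour n N c' p₁' q₁' p₂' q₂' ∧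
      TwoApart i (c' (q₂' + 1)) (c p₁) ∧ TwoApart i (c' q₂') (c (p₁ + 1)) := by
  obtain ⟨htour, hs₁, hs₂, hd⟩ := hc
  obtain ⟨i, ⟨h₁, h₂⟩ | ⟨h₁, h₂⟩⟩ := isSite_iff.1 hs₁
  · exact ⟨c, p₂, q₂, p₁, q₁, i, ⟨htour, hs₂, hs₁, hd.symm⟩, h₂, h₁.symm⟩
  · refine ⟨fun j => c (-j), -p₂ - 1, -q₂ - 1, -p₁ - 1, -q₁ - 1, i,
      ⟨htour.reverse, hs₂.reverse, hs₁.reverse, hd.reverse⟩, ?_, ?_⟩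
    · simpa only [neg_neg_sub_one_add_one] using h₂
    · simpa only [neg_neg_sub_one] using h₁.symm

lemma IsClosedTour.exists_extend_layer {t M : ℕ} {b : ZMod M → Fin (k + 1) → ℤ}
    {c : ZMod N → Fin k → ℤ} {p₁ q₁ p₂ q₂ : ZMod N}
    (hb : IsClosedTour (Fin.snoc n t) M b) (hc : IsBisitedTour n N c p₁ q₁ p₂ q₂)
    (hp₁ : HasEdge b (Fin.snoc (c p₁) t) (Fin.snoc (c (p₁ + 1)) t)) :
    ∃ (b' : ZMod (M + N) → Fin (k + 1) → ℤ) (c' : ZMod N → Fin k → ℤ)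
      (p₁' q₁' p₂' q₂' : ZMod N),
      IsClosedTour (Fin.snoc n (t + 1)) (M + N) b' ∧ IsBisitedTour n N c' p₁' q₁' p₂' q₂' ∧
      (∀ x y, HasEdge b x y → x ≠ Fin.snoc (c p₁) t → HasEdge b' x y) ∧
      ∀ y ≠ q₂', HasEdge b' (Fin.snoc (c' y) ((t + 1 : ℕ) : ℤ))
        (Fin.snoc (c' (y + 1)) ((t + 1 : ℕ) : ℤ)) := by
  obtain ⟨u, hu, hu₁⟩ := hp₁
  obtain ⟨c', p₁', q₁', p₂', q₂', i, hc', hv, hv₁⟩ := hc.exists_matching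
  have := NeZero.of_pos hb.1
  have := NeZero.of_pos hc'.1.1
  refine ⟨_, c', p₁', q₁', p₂', q₂', hb.splice hc'.1 hu hu₁ hv hv₁, hc', ?_,
    fun y hy => hasEdge_cycleSplice_right hy⟩
  rintro x y ⟨r, rfl, rfl⟩ hr
  exact hasEdge_cycleSplice_left fun e => hr (e ▸ hu)

lemma IsBisitedTour.exists_stacked {a : ZMod N → Fin k → ℤ} {p₁ q₁ p₂ q₂ : ZMod N}
    (ha : IsBisitedTour n N a p₁ q₁ p₂ q₂) {t : ℕ} (ht : 2 ≤ t) :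
    ∃ (M : ℕ) (b : ZMod M → Fin (k + 1) → ℤ) (c : ZMod N → Fin k → ℤ) (P₁ Q₁ P₂ Q₂ : ZMod N),
      IsClosedTour (Fin.snoc n t) M b ∧ IsBisitedTour n N c P₁ Q₁ P₂ Q₂ ∧
      (∀ y ≠ Q₂, HasEdge b (Fin.snoc (c y) t) (Fin.snoc (c (y + 1)) t)) ∧
      HasEdge b (Fin.snoc (a p₂) 1) (Fin.snoc (a (p₂ + 1)) 1) ∧
      HasEdge b (Fin.snoc (a q₂) 1) (Fin.snoc (a (q₂ + 1)) 1) := by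
  induction t, ht using Nat.le_induction with
  | base =>
    obtain ⟨b, c, P₁, Q₁, P₂, Q₂, hb, hc, hkeep, htop⟩ :=
      ha.1.snoc_one.exists_extend_layer ha ⟨p₁, rfl, rfl⟩
    have hne := ha.2.2.2.ne
    exact ⟨_, b, c, P₁, Q₁, P₂, Q₂, hb, hc, htop,
      hkeep _ _ ⟨p₂, rfl, rfl⟩ fun e => hne.1 (Fin.snoc_injective2 e).1.symm,
      hkeep _ _ ⟨q₂, rfl, rfl⟩ fun e => hne.2.1 (Fin.snoc_injective2 e).1.symm⟩
  | succ t ht ih =>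
    obtain ⟨M, b, c, P₁, Q₁, P₂, Q₂, hb, hc, htop, hbot₁, hbot₂⟩ := ih
    obtain ⟨b', c', P₁', Q₁', P₂', Q₂', hb', hc', hkeep, htop'⟩ :=
      hb.exists_extend_layer hc (htop P₁ (ne_of_apply_ne c hc.2.2.2.ne.2.1))
    have hlayer (y : Fin k → ℤ) :
        (Fin.snoc y 1 : Fin (k + 1) → ℤ) ≠ Fin.snoc (c P₁) (t : ℤ) := fun e => by
      have := congrFun e (Fin.last k)
      simp only [Fin.snoc_last] at this
      omega
    exact ⟨_, b', c', P₁', Q₁', P₂', Q₂', hb', hc', htop', hkeep _ _ hbot₁ (hlayer _),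
      hkeep _ _ hbot₂ (hlayer _)⟩

lemma exists_isSite_of_hasEdge_snoc {M : ℕ} {b : ZMod M → Fin (k + 1) → ℤ}
    {c : ZMod N → Fin k → ℤ} {p q : ZMod N} {τ : ℤ} (hs : IsSite c p q)
    (hp : HasEdge b (Fin.snoc (c p) τ) (Fin.snoc (c (p + 1)) τ))
    (hq : HasEdge b (Fin.snoc (c q) τ) (Fin.snoc (c (q + 1)) τ)) :
    ∃ x y, IsSite b x y ∧ ∀ z ∈ [b x, b (x + 1), b y, b (y + 1)], z (Fin.last k) = τ := by
  obtain ⟨x, hx, hx₁⟩ := hp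
  obtain ⟨y, hy, hy₁⟩ := hq
  refine ⟨x, y, ?_, by simp [hx, hx₁, hy, hy₁]⟩
  rw [isSite_iff] at hs ⊢
  rw [hx, hx₁, hy, hy₁]
  obtain ⟨i, ⟨h₁, h₂⟩ | ⟨h₁, h₂⟩⟩ := hs
  exacts [⟨i.castSucc, .inl ⟨h₁.snoc τ, h₂.snoc τ⟩⟩, ⟨i.castSucc, .inr ⟨h₁.snoc τ, h₂.snoc τ⟩⟩]

lemma disjointSites_of_last_ne {M : ℕ} {b : ZMod M → Fin (k + 1) → ℤ} {x y x' y' : ZMod M}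
    {τ τ' : ℤ} (hmov : ∀ r, knightMove (b r) (b (r + 1)))
    (hs : IsSite b x y) (hs' : IsSite b x' y')
    (h : ∀ z ∈ [b x, b (x + 1), b y, b (y + 1)], z (Fin.last k) = τ)
    (h' : ∀ z ∈ [b x', b (x' + 1), b y', b (y' + 1)], z (Fin.last k) = τ') (hne : τ ≠ τ') :
    DisjointSites b x y x' y' :=
  disjointSites_iff_nodup.2 <| List.nodup_append.2 ⟨hs.pairwise_ne hmov, hs'.pairwise_ne hmov,
    fun z hz z' hz' e => hne (by rw [← h z hz, ← h' z' hz', e])⟩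

end Stack

/-- Proposition "gain": a bi-sited closed tour of a `k`-dimensional board yields,
for every `m ≥ 2`, a bi-sited closed tour of the board with one extra dimension
of size `m`. -/
theorem bisited_tour_extend {k : ℕ} (n : Fin k → ℕ) (N : ℕ)
    (a : ZMod N → Fin k → ℤ) (ha : IsClosedTour n N a)
    (p₁ q₁ p₂ q₂ : ZMod N)
    (hs₁ : IsSite a p₁ q₁) (hs₂ : IsSite a p₂ q₂)
    (hdisj : DisjointSites a p₁ q₁ p₂ q₂)
    (m : ℕ) (hm : 2 ≤ m) :
    ∃ (M : ℕ) (b : ZMod M → Fin (k + 1) → ℤ) (p₁' q₁' p₂' q₂' : ZMod M),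
      IsClosedTour (Fin.snoc n m) M b ∧
      IsSite b p₁' q₁' ∧ IsSite b p₂' q₂' ∧
      DisjointSites b p₁' q₁' p₂' q₂' := by
  obtain ⟨M, b, c, P₁, Q₁, P₂, Q₂, hb, ⟨-, hsite, -, hdisj'⟩, htop, hbot₁, hbot₂⟩ :=
    IsBisitedTour.exists_stacked ⟨ha, hs₁, hs₂, hdisj⟩ hm
  obtain ⟨x, y, hxy, hxy_layer⟩ := exists_isSite_of_hasEdge_snoc hs₂ hbot₁ hbot₂
  have hne := hdisj'.ne
  obtain ⟨x', y', hxy', hxy'_layer⟩ := exists_isSite_of_hasEdge_snoc hsite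
    (htop P₁ (ne_of_apply_ne c hne.2.1)) (htop Q₁ (ne_of_apply_ne c hne.2.2))
  exact ⟨M, b, x, y, x', y', hb, hxy, hxy',
    disjointSites_of_last_ne hb.2.2.2.2 hxy hxy' hxy_layer hxy'_layer (by omega)⟩
end
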